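/- For all n ≥ 3, the poset of bicolored Lyndon forests FLyn_n^w and Reiner's poset of rooted spanning forests SF_n are not isomorphic as posets. -/

import Mathlib

open Finset

open scoped BigOperators Classical

/-! ## Generic machinery for edge labelings of posets presented by cover relations -/

section Chains

variable {α : Type*} {L : Type*}

/-- The word of labels read along a list of poset elements. -/
def wordOf (lab : α → α → L) : List α → List L
  | x :: y :: rest => lab x y :: wordOf lab (y :: rest)
  | _ => []

/-- `c` is a saturated chain from `x` to `y` with respect to the cover relation `cov`;
in a graded poset these are exactly the maximal chains of the interval `[x, y]`. -/
def IsSatChain (cov : α → α → Prop) (x y : α) (c : List α) : Prop :=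
  c.Chain' cov ∧ c.head? = some x ∧ c.getLast? = some y

/-- A word of labels is increasing if consecutive labels strictly increase. -/
def IncWord (lt : L → L → Prop) (w : List L) : Prop := w.Chain' lt

/-- A word of labels is ascent-free if no consecutive pair of labels strictly increases. -/
def AscFree (lt : L → L → Prop) (w : List L) : Prop := w.Chain' fun a b => ¬ lt a b

/-- The partial order generated by a cover relation. -/
def leOf (cov : α → α → Prop) : α → α → Prop := Relation.ReflTransGen cov

/-- The strict order generated by a cover relation. -/
def ltOf (cov : α → α → Prop) (a b : α) : Prop := leOf cov a b ∧ a ≠ b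

/-- An ER-labeling: every closed interval has a unique increasing maximal chain. -/
def IsERLabeling (cov : α → α → Prop) (lab : α → α → L) (lt : L → L → Prop) : Prop :=
  ∀ x y, leOf cov x y → ∃! c, IsSatChain cov x y c ∧ IncWord lt (wordOf lab c)

/-- The rank two switching property: in every rank-two interval whose increasing chain
has word of labels `ab`, there is a unique chain with word of labels `ba`. -/
def RankTwoSwitch (cov : α → α → Prop) (lab : α → α → L) (lt : L → L → Prop) : Prop :=
  ∀ x y c a b, IsSatChain cov x y c → IncWord lt (wordOf lab c) → wordOf lab c = [a, b] →
    ∃! c', IsSatChain cov x y c' ∧ wordOf lab c' = [b, a]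

/-- In every interval, distinct ascent-free maximal chains have distinct label words. -/
def AscFreeInj (cov : α → α → Prop) (lab : α → α → L) (lt : L → L → Prop) : Prop :=
  ∀ x y c c', IsSatChain cov x y c → IsSatChain cov x y c' →
    AscFree lt (wordOf lab c) → AscFree lt (wordOf lab c') →
    wordOf lab c = wordOf lab c' → c = c'

/-- An EW-labeling. -/
def IsEWLabeling (cov : α → α → Prop) (lab : α → α → L) (lt : L → L → Prop) : Prop :=
  IsERLabeling cov lab lt ∧ RankTwoSwitch cov lab lt ∧ AscFreeInj cov lab lt

/-- An EL-labeling: every closed interval has a unique increasing maximal chain,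
which lexicographically precedes every other maximal chain of the interval. -/
def IsELLabeling (cov : α → α → Prop) (lab : α → α → L) (lt : L → L → Prop) : Prop :=
  ∀ x y, leOf cov x y →
    ∃ c, (IsSatChain cov x y c ∧ IncWord lt (wordOf lab c)) ∧
      ∀ c', IsSatChain cov x y c' → c' ≠ c →
        ¬ IncWord lt (wordOf lab c') ∧ List.Lex lt (wordOf lab c) (wordOf lab c')

end Chains

/-! ## Möbius functions and Whitney numbers -/

section Whitney

variable {α : Type*} {β : Type*}

/-- Auxiliary Möbius function computed with fuel; for an element of rank `k` of a
graded poset, fuel `k` computes the one-variable Möbius function `μ(0̂, ·)`. -/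
noncomputable def muAux (ltr : α → α → Prop) (bot : α) : ℕ → α → ℤ
  | 0, x => if x = bot then 1 else 0
  | k + 1, x => if x = bot then 1 else - ∑ᶠ (y : α) (_ : ltr y x), muAux ltr bot k y

/-- The one-variable Möbius function `μ(0̂, x)` of a graded poset presented by its
cover relation `cov`, minimum `bot` and rank function `rk`. -/
noncomputable def muBot (cov : α → α → Prop) (bot : α) (rk : α → ℕ) (x : α) : ℤ :=
  muAux (ltOf cov) bot (rk x) x

/-- The `k`-th Whitney number of the first kind. -/
noncomputable def whitney1 (cov : α → α → Prop) (bot : α) (rk : α → ℕ) (k : ℕ) : ℤ :=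
  ∑ᶠ (x : α) (_ : rk x = k), muBot cov bot rk x

/-- The `k`-th Whitney number of the second kind. -/
noncomputable def whitney2 (rk : α → ℕ) (k : ℕ) : ℕ :=
  Nat.card {x : α // rk x = k}

/-- Two graded posets are Whitney duals if their Whitney numbers of the first and second
kind are swapped (up to sign). -/
def IsWhitneyDual (covP : α → α → Prop) (botP : α) (rkP : α → ℕ)
    (covQ : β → β → Prop) (botQ : β) (rkQ : β → ℕ) : Prop :=
  ∀ k, (whitney1 covP botP rkP k).natAbs = whitney2 rkQ k ∧
       (whitney1 covQ botQ rkQ k).natAbs = whitney2 rkP k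

/-- Two graded posets are Whitney twins if they have the same Whitney numbers of the first
and of the second kind. -/
def IsWhitneyTwin (covP : α → α → Prop) (botP : α) (rkP : α → ℕ)
    (covQ : β → β → Prop) (botQ : β) (rkQ : β → ℕ) : Prop :=
  ∀ k, whitney1 covP botP rkP k = whitney1 covQ botQ rkQ k ∧ whitney2 rkP k = whitney2 rkQ k

/-- `(cov, bot, rk)` presents a graded poset with minimum `bot`. -/
def IsGradedPoset (cov : α → α → Prop) (bot : α) (rk : α → ℕ) : Prop :=
  (∀ x, leOf cov bot x) ∧ rk bot = 0 ∧ ∀ x y, cov x y → rk y = rk x + 1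

/-- A graded poset has a Whitney dual. -/
def HasWhitneyDual {γ : Type} (cov : γ → γ → Prop) (bot : γ) (rk : γ → ℕ) : Prop :=
  ∃ (β : Type) (_ : Finite β) (covQ : β → β → Prop) (botQ : β) (rkQ : β → ℕ),
    IsGradedPoset covQ botQ rkQ ∧ IsWhitneyDual cov bot rk covQ botQ rkQ

/-- Isomorphism of the posets generated by two cover relations. -/
def CovPosetIso (covP : α → α → Prop) (covQ : β → β → Prop) : Prop :=
  ∃ e : α ≃ β, ∀ x y, leOf covP x y ↔ leOf covQ (e x) (e y)

end Whitney

/-! ## The label posets `Λₙʷ` and `Λₙ•` (strict order relations)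

Labels are triples `(a, b, u)` with `a < b` in `[n]` and `u ∈ {0,1}` (encoded as `Bool`). -/

/-- The strict order of `Λₙʷ = Γ₁ ⊕ ⋯ ⊕ Γ_{n-1}` where `Γ_a` carries the product order
`(a,b)ᵘ ≤ (a,c)ᵛ ↔ b ≤ c ∧ u ≤ v`. -/
def ltLw (x y : ℕ × ℕ × Bool) : Prop :=
  x.1 < y.1 ∨ (x.1 = y.1 ∧ x.2.1 ≤ y.2.1 ∧ x.2.2 ≤ y.2.2 ∧ x.2 ≠ y.2)

/-- The strict order of `Λₙ• = A₁ ⊕ C₁ ⊕ ⋯ ⊕ A_{n-1} ⊕ C_{n-1}` where `A_a` is the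
antichain of the `(a,b)⁰` and `C_a` is the chain of the `(a,b)¹` ordered by `b`. -/
def ltLp (x y : ℕ × ℕ × Bool) : Prop :=
  x.1 < y.1 ∨ (x.1 = y.1 ∧
    ((x.2.2 = false ∧ y.2.2 = true) ∨ (x.2.2 = true ∧ y.2.2 = true ∧ x.2.1 < y.2.1)))

/-! ## Pointed and weighted partition posets -/

/-- The minimum of a finite set of naturals (`0` for the empty set). -/
def minB (B : Finset ℕ) : ℕ := WithTop.untopD 0 B.min

/-- Pointed partitions of the ground set `A`: partitions of `A` into blocks, each block
carrying a distinguished (pointed) element.  A pointed block is a pair `(B, p)` with `p ∈ B`. -/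
abbrev PPart (A : Finset ℕ) : Type :=
  {π : Finset (Finset ℕ × ℕ) //
    (∀ b ∈ π, b.2 ∈ b.1) ∧
    (∀ b ∈ π, ∀ b' ∈ π, b ≠ b' → Disjoint b.1 b'.1) ∧
    π.biUnion Prod.fst = A}

/-- The cover relation of the pointed partition poset: merge two pointed blocks, the merged
block being pointed at the pointed element of one of the two. -/
def covPP {A : Finset ℕ} (π π' : PPart A) : Prop :=
  ∃ b1 ∈ π.1, ∃ b2 ∈ π.1, minB b1.1 < minB b2.1 ∧
    ∃ p : ℕ, (p = b1.2 ∨ p = b2.2) ∧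
      π'.1 = insert (b1.1 ∪ b2.1, p) ((π.1.erase b1).erase b2)

/-- The labeling `λ•` (as a bare label map): the cover `u`-merging blocks `A, B` with
`min A < min B` gets the label `(min A, min B, u)`, where `u = 1` exactly when the merged
block is pointed at the pointed element of `A`. -/
noncomputable def labPP {A : Finset ℕ} (π π' : PPart A) : ℕ × ℕ × Bool :=
  let olds := π.1 \ π'.1
  let mins := olds.image (fun b => minB b.1)
  (WithTop.untopD 0 mins.min, WithBot.unbotD 0 mins.max,
    if ∃ b ∈ olds, minB b.1 = WithTop.untopD 0 mins.min ∧ ∃ d ∈ π'.1 \ π.1, d.2 = b.2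
      then true else false)

/-- The minimum of the pointed partition poset: all blocks are pointed singletons. -/
def botPP (A : Finset ℕ) : PPart A :=
  ⟨A.image fun i => ({i}, i), by
    refine ⟨?_, ?_, ?_⟩
    · intro b hb
      obtain ⟨i, -, rfl⟩ := Finset.mem_image.1 hb
      exact Finset.mem_singleton_self i
    · intro b hb b' hb' hne
      obtain ⟨i, -, rfl⟩ := Finset.mem_image.1 hb
      obtain ⟨j, -, rfl⟩ := Finset.mem_image.1 hb'
      have hij : i ≠ j := fun h => hne (by rw [h])
      simp [Finset.disjoint_left, hij]
    · ext x
      simp⟩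

/-- The rank function of the pointed partition poset. -/
def rkPP {A : Finset ℕ} (π : PPart A) : ℕ := A.card - π.1.card

/-- Weighted partitions of the ground set `A`: partitions of `A` into blocks, each block `B`
carrying a weight `v` with `0 ≤ v ≤ |B| - 1`. -/
abbrev WPart (A : Finset ℕ) : Type :=
  {π : Finset (Finset ℕ × ℕ) //
    (∀ b ∈ π, b.2 < b.1.card) ∧
    (∀ b ∈ π, ∀ b' ∈ π, b ≠ b' → Disjoint b.1 b'.1) ∧
    π.biUnion Prod.fst = A}

/-- The cover relation of the weighted partition poset: merge blocks `A^v, B^w` into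
`(A ∪ B)^(v+w+u)` for some `u ∈ {0,1}`. -/
def covWP {A : Finset ℕ} (π π' : WPart A) : Prop :=
  ∃ b1 ∈ π.1, ∃ b2 ∈ π.1, minB b1.1 < minB b2.1 ∧ ∃ u : Bool,
    π'.1 = insert (b1.1 ∪ b2.1, b1.2 + b2.2 + (if u then 1 else 0)) ((π.1.erase b1).erase b2)

/-- The labeling `λ_w` (as a bare label map): the cover merging `A^v, B^w` with
`min A < min B` into `(A ∪ B)^(v+w+u)` gets the label `(min A, min B, u)`. -/
noncomputable def labWP {A : Finset ℕ} (π π' : WPart A) : ℕ × ℕ × Bool :=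
  let olds := π.1 \ π'.1
  let mins := olds.image (fun b => minB b.1)
  (WithTop.untopD 0 mins.min, WithBot.unbotD 0 mins.max,
    if (π'.1 \ π.1).sum Prod.snd = olds.sum Prod.snd + 1 then true else false)

/-- The minimum of the weighted partition poset: all blocks singletons of weight `0`. -/
def botWP (A : Finset ℕ) : WPart A :=
  ⟨A.image fun i => ({i}, 0), by
    refine ⟨?_, ?_, ?_⟩
    · intro b hb
      obtain ⟨i, -, rfl⟩ := Finset.mem_image.1 hb
      simp
    · intro b hb b' hb' hne
      obtain ⟨i, -, rfl⟩ := Finset.mem_image.1 hb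
      obtain ⟨j, -, rfl⟩ := Finset.mem_image.1 hb'
      have hij : i ≠ j := fun h => hne (by rw [h])
      simp [Finset.disjoint_left, hij]
    · ext x
      simp⟩

/-- The rank function of the weighted partition poset. -/
def rkWP {A : Finset ℕ} (π : WPart A) : ℕ := A.card - π.1.card
/-! ## Bicolored binary trees and Lyndon forests -/

/-- Planar binary trees with `ℕ`-labeled leaves and `Bool`-colored internal vertices
(`false` = color 0, `true` = color 1). -/
inductive BT : Type
  | leaf : ℕ → BT
  | node : Bool → BT → BT → BT
deriving DecidableEq

namespace BT

/-- The valency: the minimum leaf label of a tree. -/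
def nu : BT → ℕ
  | leaf a => a
  | node _ l r => min l.nu r.nu

/-- The set of leaf labels of a tree. -/
def leaves : BT → Finset ℕ
  | leaf a => {a}
  | node _ l r => l.leaves ∪ r.leaves

/-- The number of internal vertices of a tree. -/
def internals : BT → ℕ
  | leaf _ => 0
  | node _ l r => l.internals + r.internals + 1

/-- A tree is normalized if its leaf labels are distinct and every internal vertex has the
same valency as its left child. -/
def normalized : BT → Prop
  | leaf _ => True
  | node _ l r => l.normalized ∧ r.normalized ∧ Disjoint l.leaves r.leaves ∧ l.nu < r.nu

/-- The pointed Lyndon condition: at every internal vertex `v` with internal left child,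
`color (L v) ≥ color v`, and if `color (L v) = color v = 1` then `v` is a Lyndon vertex,
i.e. `ν (R (L v)) > ν (R v)`. -/
def pLyn : BT → Prop
  | leaf _ => True
  | node c l r => l.pLyn ∧ r.pLyn ∧
      (match l with
       | leaf _ => True
       | node c' _ r' => c ≤ c' ∧ ((c' = c ∧ c = true) → r.nu < r'.nu))

/-- The bicolored Lyndon condition: every internal vertex with internal left child is
Lyndon (`ν (R (L v)) > ν (R v)`) or satisfies `color (L v) > color v`. -/
def wLyn : BT → Prop
  | leaf _ => True
  | node c l r => l.wLyn ∧ r.wLyn ∧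
      (match l with
       | leaf _ => True
       | node c' _ r' => r.nu < r'.nu ∨ c < c')

/-- The pointed element of a bicolored tree: a `1`-colored vertex keeps the point of its
left subtree and a `0`-colored vertex keeps the point of its right subtree. -/
def ppt : BT → ℕ
  | leaf a => a
  | node c l r => if c then l.ppt else r.ppt

end BT

/-- `u`-merging of two pointed Lyndon trees: create a new root of color `u` with the two
trees as subtrees, then repeatedly slide the new vertex together with its right subtree
past its left child until the pointed Lyndon condition holds at the new vertex. -/
def mergeP (u : Bool) : BT → BT → BT
  | BT.leaf a, t2 => BT.node u (BT.leaf a) t2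
  | BT.node c a b, t2 =>
      if u ≤ c ∧ ((c = true ∧ u = true) → t2.nu < b.nu)
      then BT.node u (BT.node c a b) t2
      else BT.node c (mergeP u a t2) b

/-- `u`-merging of two bicolored Lyndon trees: create a new root of color `u` with the two
trees as subtrees, then repeatedly slide the new vertex together with its right subtree
past its left child until the bicolored Lyndon condition holds at the new vertex. -/
def mergeW (u : Bool) : BT → BT → BT
  | BT.leaf a, t2 => BT.node u (BT.leaf a) t2
  | BT.node c a b, t2 =>
      if t2.nu < b.nu ∨ u < c
      then BT.node u (BT.node c a b) t2
      else BT.node c (mergeW u a t2) b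

/-- A valid forest on the ground set `[n]`, each tree normalized and satisfying `P`, the
trees having pairwise disjoint leaf sets which together cover `[n] = {1, …, n}`. -/
def ForestValid (n : ℕ) (P : BT → Prop) (F : Finset BT) : Prop :=
  (∀ t ∈ F, t.normalized ∧ P t) ∧
  (∀ t ∈ F, ∀ t' ∈ F, t ≠ t' → Disjoint t.leaves t'.leaves) ∧
  F.biUnion BT.leaves = Finset.Icc 1 n

/-- The set of pointed Lyndon forests on `[n]`. -/
abbrev FLynP (n : ℕ) : Type := {F : Finset BT // ForestValid n BT.pLyn F}

/-- The set of bicolored Lyndon forests on `[n]`. -/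
abbrev FLynW (n : ℕ) : Type := {F : Finset BT // ForestValid n BT.wLyn F}

/-- The cover relation on forests: `u`-merge two of the trees (the one with smaller minimum
leaf label going to the left). -/
def covForest (merge : Bool → BT → BT → BT) (F F' : Finset BT) : Prop :=
  ∃ t1 ∈ F, ∃ t2 ∈ F, t1.nu < t2.nu ∧ ∃ u : Bool,
    F' = insert (merge u t1 t2) ((F.erase t1).erase t2)

/-- The cover relation of the poset of pointed Lyndon forests `FLyn_n^•`. -/
def covFP {n : ℕ} (F F' : FLynP n) : Prop := covForest mergeP F.1 F'.1

/-- The cover relation of the poset of bicolored Lyndon forests `FLyn_n^w`. -/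
def covFW {n : ℕ} (F F' : FLynW n) : Prop := covForest mergeW F.1 F'.1

/-- The forest of `n` isolated leaves. -/
def botForest (n : ℕ) : Finset BT := (Finset.Icc 1 n).image BT.leaf

theorem botForest_valid (n : ℕ) (P : BT → Prop) (hP : ∀ a, P (BT.leaf a)) :
    ForestValid n P (botForest n) := by
  refine ⟨?_, ?_, ?_⟩
  · intro t ht
    obtain ⟨i, -, rfl⟩ := Finset.mem_image.1 ht
    exact ⟨trivial, hP i⟩
  · intro t ht t' ht' hne
    obtain ⟨i, -, rfl⟩ := Finset.mem_image.1 ht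
    obtain ⟨j, -, rfl⟩ := Finset.mem_image.1 ht'
    have hij : i ≠ j := fun h => hne (by rw [h])
    simp only [BT.leaves]
    simp [Finset.disjoint_left, hij]
  · ext x
    simp [botForest, BT.leaves]

/-- The minimum of the poset of pointed Lyndon forests. -/
def botFP (n : ℕ) : FLynP n := ⟨botForest n, botForest_valid n _ fun _ => trivial⟩

/-- The minimum of the poset of bicolored Lyndon forests. -/
def botFW (n : ℕ) : FLynW n := ⟨botForest n, botForest_valid n _ fun _ => trivial⟩

/-- The rank of a forest: its total number of internal vertices. -/
def rkForest (F : Finset BT) : ℕ := F.sum BT.internals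

/-- The rank function of `FLyn_n^•`. -/
def rkFP {n : ℕ} (F : FLynP n) : ℕ := rkForest F.1

/-- The rank function of `FLyn_n^w`. -/
def rkFW {n : ℕ} (F : FLynW n) : ℕ := rkForest F.1

/-! ## The Whitney dual construction `R_λ(P)` -/

section RPoset

variable {α : Type*} {L : Type*}

/-- Swap the leftmost ascent of a word of labels. -/
noncomputable def swapFirstAscent (lt : L → L → Prop) : List L → List L
  | a :: b :: rest => if lt a b then b :: a :: rest else a :: swapFirstAscent lt (b :: rest)
  | w => w

/-- Sort a word of labels by repeatedly swapping its leftmost ascent until it is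
ascent-free. -/
noncomputable def sortWord (lt : L → L → Prop) (w : List L) : List L :=
  (swapFirstAscent lt)^[w.length * w.length] w

/-- The underlying set of the Whitney dual `R_λ(P)`: pairs `(x, w)` where `w` is the label
word of an ascent-free saturated chain from `0̂` to `x`. -/
abbrev RPoset (cov : α → α → Prop) (lab : α → α → L) (lt : L → L → Prop) (bot : α) : Type _ :=
  {q : α × List L //
    ∃ c, IsSatChain cov bot q.1 c ∧ AscFree lt (wordOf lab c) ∧ wordOf lab c = q.2}

/-- The cover relation of `R_λ(P)`: `(x, w) ⋖ (y, u)` iff `x ⋖ y` and `u` is obtained by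
sorting the label of `x ⋖ y` into `w`. -/
def covR (cov : α → α → Prop) (lab : α → α → L) (lt : L → L → Prop) (bot : α)
    (p q : RPoset cov lab lt bot) : Prop :=
  cov p.1.1 q.1.1 ∧ q.1.2 = sortWord lt (p.1.2 ++ [lab p.1.1 q.1.1])

end RPoset

/-! ## Reiner's poset of rooted spanning forests -/

/-- A rooted spanning forest on `[n]`, encoded by its parent function: `f i` is the parent
of the vertex `i` (`f i = i` for roots), vertices outside `[n]` being fixed, and every
vertex reaching a root after finitely many steps (acyclicity). -/
def SFvalid (n : ℕ) (f : ℕ → ℕ) : Prop :=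
  (∀ i ∈ Finset.Icc 1 n, f i ∈ Finset.Icc 1 n) ∧
  (∀ i, i ∉ Finset.Icc 1 n → f i = i) ∧
  (∀ i, ∃ k, f^[k + 1] i = f^[k] i)

/-- Reiner's poset `SF_n` of rooted spanning forests of the complete graph on `[n]`. -/
abbrev SF (n : ℕ) : Type := {f : ℕ → ℕ // SFvalid n f}

/-- The cover relation of `SF_n`: add an edge between the roots of two trees, one of the
two roots becoming the root of the merged tree. -/
def covSF {n : ℕ} (f g : SF n) : Prop :=
  ∃ r1 ∈ Finset.Icc 1 n, ∃ r2 ∈ Finset.Icc 1 n, r1 ≠ r2 ∧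
    f.1 r1 = r1 ∧ f.1 r2 = r2 ∧
    (g.1 = Function.update f.1 r1 r2 ∨ g.1 = Function.update f.1 r2 r1)

/-- The rank of a rooted spanning forest: its number of edges. -/
def rkSF {n : ℕ} (f : SF n) : ℕ := ((Finset.Icc 1 n).filter fun i => f.1 i ≠ i).card
/-! ## Further constructions used in particular statements -/

/-- The map `Φ` on underlying finsets: a pointed block `(B, q)` of a pointed partition
above `α` is sent to the set of minima of the `α`-blocks contained in `B`, pointed at the
minimum of the `α`-block containing `q`. -/
noncomputable def PhiMap (af : Finset (Finset ℕ × ℕ)) (pf : Finset (Finset ℕ × ℕ)) :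
    Finset (Finset ℕ × ℕ) :=
  pf.image fun b =>
    ((af.filter fun c => c.1 ⊆ b.1).image fun c => minB c.1,
     WithTop.untopD 0 ((af.filter fun c => b.2 ∈ c.1).image fun c => minB c.1).min)

/-- The expected word of labels of the unique increasing maximal chain of the interval
`[0̂, [n]^p]` of the pointed partition poset:
`(1,2)¹ ⋯ (1,n)¹` if `p = 1`, and `(1,p)⁰ (1,2)¹ ⋯ (1,p-1)¹ (1,p+1)¹ ⋯ (1,n)¹` otherwise. -/
def expectedWordP (n p : ℕ) : List (ℕ × ℕ × Bool) :=
  let base := (List.range (n - 1)).map fun i => ((1 : ℕ), i + 2, true)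
  if p = 1 then base else ((1 : ℕ), p, false) :: base.erase (1, p, true)

/-- Merge two words of labels, each with non-increasing first components, into a single
word with non-increasing first components. -/
def mergeByNu : List (ℕ × ℕ × Bool) → List (ℕ × ℕ × Bool) → List (ℕ × ℕ × Bool)
  | [], ys => ys
  | xs, [] => xs
  | x :: xs, y :: ys =>
      if y.1 ≤ x.1 then x :: mergeByNu xs (y :: ys) else y :: mergeByNu (x :: xs) ys
termination_by xs ys => xs.length + ys.length

/-- The word of labels of a tree read along the reverse-minimal linear extension of its
internal vertices: the internal vertex `v` contributes `(ν (L v), ν (R v), color v)`, the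
vertices being listed with non-increasing valencies (descendants first among equal
valencies). -/
def BT.rmword : BT → List (ℕ × ℕ × Bool)
  | BT.leaf _ => []
  | BT.node c l r => mergeByNu l.rmword r.rmword ++ [(l.nu, r.nu, c)]

/-- The word of labels of the saturated chain `c(F)` associated to a forest `F`, read along
the reverse-minimal linear extension of the internal vertices of `F`. -/
noncomputable def forestWord (F : Finset BT) : List (ℕ × ℕ × Bool) :=
  (F.toList.map BT.rmword).foldr mergeByNu []

/-- `TLyn_{n,p}^•`: pointed Lyndon trees on `[n]` whose associated chain ends at `[n]^p`,
i.e. whose tracked pointed element is `p`. -/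
abbrev TLynBullet (n p : ℕ) : Type :=
  {T : BT // T.normalized ∧ T.pLyn ∧ T.leaves = Finset.Icc 1 n ∧ T.ppt = p}

/-- The labeling `λ̃` of `Πₙ•` proposed by Bellier-Millès, Delcroix-Oger and Hoffbeck:
the cover `u`-merging blocks with minima `a < b` in a pointed partition `π` with `|π|`
blocks is labeled `(b, a + n - |π|)` if `u = 0` and `(b, b + n - |π|)` if `u = 1`. -/
noncomputable def labT (n : ℕ) {A : Finset ℕ} (π π' : PPart A) : ℕ × ℕ :=
  let olds := π.1 \ π'.1
  let mins := olds.image fun b => minB b.1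
  let a := WithTop.untopD 0 mins.min
  let b := WithBot.unbotD 0 mins.max
  if ∃ c ∈ olds, minB c.1 = a ∧ ∃ d ∈ π'.1 \ π.1, d.2 = c.2
  then (b, b + n - π.1.card)
  else (b, a + n - π.1.card)

/-- The (strict) lexicographic order on `ℕ × ℕ`. -/
def ltT (x y : ℕ × ℕ) : Prop := x.1 < y.1 ∨ (x.1 = y.1 ∧ x.2 < y.2)

/-!
The invariant separating the two posets is the existence of an atom `a` such that every
element covering `a` also covers some element other than `a`.

In `FLynₙʷ` the cherry `(1 2)⁰` is such an atom. Merging it with a leaf `m` gives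
`((1 m)ᵘ 2)⁰`, which is also the merge of the cherry `(1 m)ᵘ` with the leaf `2`; merging two
other leaves `i < j` gives a forest that also covers the cherry `(i j)ᵘ`.

In `SFₙ` every atom is a single edge `p → q`, and for `z ∉ {p, q}` the path `p → q → z`
covers nothing else: a lower cover deletes an edge ending at a root, and `q → z` is the only one.
-/

section CoverRelation

variable {α β : Type*}

def CovByOf (cov : α → α → Prop) (x y : α) : Prop :=
  ltOf cov x y ∧ ¬ ∃ z, ltOf cov x z ∧ ltOf cov z y

def IsAtomOf (cov : α → α → Prop) (a : α) : Prop :=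
  ∃ m, (∀ z, leOf cov z m → z = m) ∧ CovByOf cov m a

def HasAtomWithSharedCovers (cov : α → α → Prop) : Prop :=
  ∃ a, IsAtomOf cov a ∧ ∀ x, CovByOf cov a x → ∃ b ≠ a, CovByOf cov b x

section Iso

variable {covP : α → α → Prop} {covQ : β → β → Prop} {e : α ≃ β}

lemma ltOf_congr (he : ∀ x y, leOf covP x y ↔ leOf covQ (e x) (e y)) (x y : α) :
    ltOf covP x y ↔ ltOf covQ (e x) (e y) := by
  simp only [ltOf, he, ne_eq, EmbeddingLike.apply_eq_iff_eq]

lemma covByOf_congr (he : ∀ x y, leOf covP x y ↔ leOf covQ (e x) (e y)) (x y : α) :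
    CovByOf covP x y ↔ CovByOf covQ (e x) (e y) :=
  and_congr (ltOf_congr he x y) <| not_congr <|
    e.exists_congr fun z => and_congr (ltOf_congr he x z) (ltOf_congr he z y)

lemma isAtomOf_congr (he : ∀ x y, leOf covP x y ↔ leOf covQ (e x) (e y)) (a : α) :
    IsAtomOf covP a ↔ IsAtomOf covQ (e a) :=
  e.exists_congr fun m => and_congr
    (e.forall_congr fun z => by rw [he, e.apply_eq_iff_eq]) (covByOf_congr he m a)

lemma hasAtomWithSharedCovers_congr (h : CovPosetIso covP covQ) :
    HasAtomWithSharedCovers covP ↔ HasAtomWithSharedCovers covQ := by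
  obtain ⟨e, he⟩ := h
  refine e.exists_congr fun a => and_congr (isAtomOf_congr he a) <|
    e.forall_congr fun x => imp_congr (covByOf_congr he a x) <|
      e.exists_congr fun b => and_congr e.injective.ne_iff.symm (covByOf_congr he b x)

end Iso

section Graded

variable {cov : α → α → Prop} {rk : α → ℕ}

lemma rank_le_of_leOf (hrk : ∀ x y, cov x y → rk y = rk x + 1) {x y : α}
    (h : leOf cov x y) : rk x ≤ rk y := by
  induction h with
  | refl => exact le_rfl
  | tail _ hzy ih => have := hrk _ _ hzy; omega

lemma rank_lt_of_ltOf (hrk : ∀ x y, cov x y → rk y = rk x + 1) {x y : α}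
    (h : ltOf cov x y) : rk x < rk y := by
  obtain ⟨hle, hne⟩ := h
  rcases Relation.ReflTransGen.cases_head hle with rfl | ⟨z, hxz, hzy⟩
  · exact absurd rfl hne
  · have := hrk _ _ hxz
    have := rank_le_of_leOf hrk hzy
    omega

lemma covByOf_iff_cov (hrk : ∀ x y, cov x y → rk y = rk x + 1) {x y : α} :
    CovByOf cov x y ↔ cov x y := by
  refine ⟨fun ⟨⟨hle, hne⟩, hno⟩ => ?_, fun h => ⟨⟨.single h, ?_⟩, ?_⟩⟩
  · rcases Relation.ReflTransGen.cases_head hle with rfl | ⟨z, hxz, hzy⟩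
    · exact absurd rfl hne
    · by_cases hzy' : z = y
      · exact hzy' ▸ hxz
      · refine absurd ⟨z, ⟨.single hxz, ?_⟩, hzy, hzy'⟩ hno
        rintro rfl
        have := hrk _ _ hxz
        omega
  · rintro rfl
    have := hrk _ _ h
    omega
  · rintro ⟨z, hxz, hzy⟩
    have := rank_lt_of_ltOf hrk hxz
    have := rank_lt_of_ltOf hrk hzy
    have := hrk _ _ h
    omega

lemma eq_of_leOf_of_rank_eq_zero (hrk : ∀ x y, cov x y → rk y = rk x + 1) {m : α}
    (hm : rk m = 0) (z : α) (hz : leOf cov z m) : z = m := by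
  by_contra hne
  have := rank_lt_of_ltOf hrk ⟨hz, hne⟩
  omega

end Graded

end CoverRelation

lemma exists_iterate_succ_eq_of_agree_or_fixed {α : Type*} {f g : α → α}
    (hf : ∀ i, ∃ k, f^[k + 1] i = f^[k] i) (hg : ∀ j, g j = f j ∨ g (g j) = g j) (i : α) :
    ∃ k, g^[k + 1] i = g^[k] i := by
  obtain ⟨k, hk⟩ := hf i
  induction k generalizing i with
  | zero =>
    rcases hg i with h | h
    · exact ⟨0, by simpa [h] using hk⟩
    · exact ⟨1, by simpa using h⟩
  | succ k ih =>
    rcases hg i with h | h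
    · obtain ⟨m, hm⟩ := ih (f i) (by simpa only [Function.iterate_succ_apply] using hk)
      exact ⟨m + 1, by simpa only [Function.iterate_succ_apply, h] using hm⟩
    · exact ⟨1, by simpa using h⟩

lemma exists_apply_ne_self_and_apply_apply_eq {α : Type*} {f : α → α} (k : ℕ) (i : α)
    (hk : f^[k + 1] i = f^[k] i) (hi : f i ≠ i) : ∃ c, f c ≠ c ∧ f (f c) = f c := by
  induction k generalizing i with
  | zero => exact absurd hk hi
  | succ k ih =>
    by_cases h : f (f i) = f i
    · exact ⟨i, hi, h⟩
    · exact ih (f i) (by simpa only [Function.iterate_succ_apply] using hk) h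

section SpanningForests

variable {n : ℕ}

lemma SFvalid.update {f : ℕ → ℕ} (hf : SFvalid n f) {r s : ℕ} (hr : r ∈ Icc 1 n)
    (hs : s ∈ Icc 1 n) (hroot : f s = s ∨ s = r) : SFvalid n (Function.update f r s) := by
  refine ⟨fun j hj => ?_, fun j hj => ?_,
    exists_iterate_succ_eq_of_agree_or_fixed hf.2.2 fun j => ?_⟩
  · rcases eq_or_ne j r with rfl | hjr
    · simpa using hs
    · simpa [hjr] using hf.1 j hj
  · have hjr : j ≠ r := fun h => hj (h ▸ hr)
    simpa [hjr] using hf.2.1 j hj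
  · rcases eq_or_ne j r with rfl | hjr
    · right
      rcases eq_or_ne s j with rfl | hsj
      · simp
      · simpa [hsj] using hroot.resolve_right hsj
    · simp [hjr]

lemma covSF_iff {f g : SF n} : covSF f g ↔
    ∃ r ∈ Icc 1 n, ∃ s ∈ Icc 1 n, r ≠ s ∧
      f.1 r = r ∧ f.1 s = s ∧ g.1 = Function.update f.1 r s := by
  constructor
  · rintro ⟨r1, h1, r2, h2, hne, hf1, hf2, hg | hg⟩
    · exact ⟨r1, h1, r2, h2, hne, hf1, hf2, hg⟩
    · exact ⟨r2, h2, r1, h1, hne.symm, hf2, hf1, hg⟩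
  · rintro ⟨r, h1, s, h2, hne, hf1, hf2, hg⟩
    exact ⟨r, h1, s, h2, hne, hf1, hf2, Or.inl hg⟩

lemma rkSF_of_covSF {f g : SF n} (h : covSF f g) : rkSF g = rkSF f + 1 := by
  obtain ⟨r, hr, s, -, hrs, hfr, -, hg⟩ := covSF_iff.1 h
  have hset : (Icc 1 n).filter (fun i => g.1 i ≠ i)
      = insert r ((Icc 1 n).filter fun i => f.1 i ≠ i) := by
    ext i
    rcases eq_or_ne i r with rfl | hir
    · simp [hg, hr, hrs.symm]
    · simp [hg, hir]
  rw [rkSF, rkSF, hset, card_insert_of_notMem (by simp [hfr])]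

lemma exists_eq_update_of_covSF {b x : SF n} (h : covSF b x) :
    ∃ r, x.1 r ≠ r ∧ x.1 (x.1 r) = x.1 r ∧ b.1 = Function.update x.1 r r := by
  obtain ⟨r, -, s, -, hrs, hbr, hbs, hx⟩ := covSF_iff.1 h
  refine ⟨r, by simpa [hx] using hrs.symm, by simpa [hx, hrs.symm] using hbs, ?_⟩
  rw [hx, Function.update_idem, Function.update_eq_self_iff.2 hbr.symm]

lemma SF.apply_eq_self_of_minimal {m : SF n} (hmin : ∀ z : SF n, leOf covSF z m → z = m)
    (i : ℕ) : m.1 i = i := by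
  by_contra hi
  obtain ⟨k, hk⟩ := m.2.2.2 i
  obtain ⟨c, hc, hmc⟩ := exists_apply_ne_self_and_apply_apply_eq k i hk hi
  have hcn : c ∈ Icc 1 n := by_contra fun h => hc (m.2.2.1 c h)
  let g : SF n := ⟨Function.update m.1 c c, m.2.update hcn hcn (Or.inr rfl)⟩
  have hgm : covSF g m := covSF_iff.2 ⟨c, hcn, m.1 c, m.2.1 c hcn, hc.symm,
    by simp [g], by simpa [g, hc] using hmc,
    by simp [g, Function.update_idem, Function.update_eq_self]⟩
  have hgc : g.1 c = m.1 c := by rw [hmin g (.single hgm)]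
  exact hc (by simpa [g] using hgc.symm)

lemma exists_mem_Icc_ne_ne (hn : 3 ≤ n) (p q : ℕ) : ∃ z ∈ Icc 1 n, z ≠ p ∧ z ≠ q := by
  have : ({p, q} : Finset ℕ).card < (Icc 1 n).card := by
    simpa using (card_le_two (a := p) (b := q)).trans_lt (by omega)
  obtain ⟨z, hz, hzpq⟩ := exists_mem_notMem_of_card_lt_card this
  exact ⟨z, hz, by simpa [not_or] using hzpq⟩

lemma not_hasAtomWithSharedCovers_covSF (hn : 3 ≤ n) :
    ¬ HasAtomWithSharedCovers (covSF (n := n)) := by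
  have hrk : ∀ f g : SF n, covSF f g → rkSF g = rkSF f + 1 := fun _ _ => rkSF_of_covSF
  rintro ⟨a, ⟨m, hmin, hma⟩, hshared⟩
  obtain ⟨p, -, q, hq, hpq, -, -, ha⟩ := covSF_iff.1 ((covByOf_iff_cov hrk).1 hma)
  have ha' : ∀ j, a.1 j = if j = p then q else j := by
    simp [ha, Function.update_apply, SF.apply_eq_self_of_minimal hmin]
  obtain ⟨z, hz, hzp, hzq⟩ := exists_mem_Icc_ne_ne hn p q
  have haq : a.1 q = q := by simp [ha', hpq.symm]
  have haz : a.1 z = z := by simp [ha', hzp]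
  let x : SF n := ⟨Function.update a.1 q z, a.2.update hq hz (Or.inl haz)⟩
  have hax : covSF a x := covSF_iff.2 ⟨q, hq, z, hz, hzq.symm, haq, haz, rfl⟩
  obtain ⟨b, hba, hbx⟩ := hshared x ((covByOf_iff_cov hrk).2 hax)
  obtain ⟨r, hxr, hxxr, hb⟩ := exists_eq_update_of_covSF ((covByOf_iff_cov hrk).1 hbx)
  have hrq : r = q := by
    by_contra hrq
    have hrp : r = p := by by_contra hrp; simp [x, ha', hrq, hrp] at hxr
    simp [x, ha', hrp, hpq, hzq] at hxxr
  refine hba (Subtype.ext ?_)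
  rw [hb, hrq, Function.update_idem, Function.update_eq_self_iff.2 haq.symm]

end SpanningForests

section LyndonForests

variable {n : ℕ}

lemma BT.leaves_nonempty (t : BT) : t.leaves.Nonempty := by
  induction t with
  | leaf a => exact ⟨a, by simp [BT.leaves]⟩
  | node c l r ihl _ => exact ihl.mono subset_union_left

lemma BT.internals_mergeW (u : Bool) (t1 t2 : BT) :
    (mergeW u t1 t2).internals = t1.internals + t2.internals + 1 := by
  induction t1 with
  | leaf a => simp [mergeW, BT.internals]
  | node c l r ihl _ =>
    rw [mergeW]
    split_ifs
    · simp [BT.internals]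
    · simp only [BT.internals, ihl]
      omega

lemma BT.leaves_mergeW (u : Bool) (t1 t2 : BT) :
    (mergeW u t1 t2).leaves = t1.leaves ∪ t2.leaves := by
  induction t1 with
  | leaf a => simp [mergeW, BT.leaves]
  | node c l r ihl _ =>
    rw [mergeW]
    split_ifs
    · rfl
    · simp only [BT.leaves, ihl, union_right_comm]

lemma rkFW_of_covFW {F F' : FLynW n} (h : covFW F F') : rkFW F' = rkFW F + 1 := by
  obtain ⟨t1, ht1, t2, ht2, hnu, u, hF'⟩ := h
  have ht12 : t2 ∈ F.1.erase t1 := mem_erase.2 ⟨fun h => (h ▸ hnu).false, ht2⟩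
  have hmerge : mergeW u t1 t2 ∉ (F.1.erase t1).erase t2 := by
    intro hm
    obtain ⟨x, hx⟩ := t1.leaves_nonempty
    have hdisj := F.2.2.1 _ (mem_of_mem_erase (mem_of_mem_erase hm)) t1 ht1
      (ne_of_mem_erase (mem_of_mem_erase hm))
    exact disjoint_left.1 hdisj (by simp [BT.leaves_mergeW, hx]) hx
  simp only [rkFW, rkForest, hF', sum_insert hmerge, BT.internals_mergeW]
  rw [← sum_erase_add _ _ ht1, ← sum_erase_add _ _ ht12]
  omega

def withLeaves (n : ℕ) (S : Finset BT) : Finset BT :=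
  S ∪ (Icc 1 n \ S.biUnion BT.leaves).image BT.leaf

lemma withLeaves_empty (n : ℕ) : withLeaves n ∅ = botForest n := by
  simp [withLeaves, botForest]

lemma mem_withLeaves {S : Finset BT} {t : BT} :
    t ∈ withLeaves n S ↔
      t ∈ S ∨ ∃ i ∈ Icc 1 n, (∀ T ∈ S, i ∉ T.leaves) ∧ t = BT.leaf i := by
  simp [withLeaves, eq_comm, and_assoc]

lemma withLeaves_singleton_valid {T : BT} (hT : T.normalized) (hT' : T.wLyn)
    (hTn : T.leaves ⊆ Icc 1 n) : ForestValid n BT.wLyn (withLeaves n {T}) := by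
  simp only [ForestValid, mem_withLeaves, mem_singleton, forall_eq]
  refine ⟨?_, ?_, ?_⟩
  · rintro t (rfl | ⟨i, -, -, rfl⟩)
    · exact ⟨hT, hT'⟩
    · exact ⟨trivial, trivial⟩
  · rintro t (rfl | ⟨i, -, hi, rfl⟩) t' (rfl | ⟨j, -, hj, rfl⟩) hne
    · exact absurd rfl hne
    · simpa [BT.leaves] using hj
    · simpa [BT.leaves] using hi
    · simpa [BT.leaves] using fun h : i = j => hne (h ▸ rfl)
  · ext x
    by_cases hx : x ∈ T.leaves
    · simp [withLeaves, hx, hTn hx]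
    · simp [withLeaves, hx, BT.leaves]

def cherry (u : Bool) (a b : ℕ) : BT := BT.node u (BT.leaf a) (BT.leaf b)

lemma cherry_leaves (u : Bool) (a b : ℕ) : (cherry u a b).leaves = {a, b} := rfl

lemma withLeaves_insert_cherry {S : Finset BT} (u : Bool) {i j : ℕ}
    (hiS : ∀ T ∈ S, i ∉ T.leaves) (hjS : ∀ T ∈ S, j ∉ T.leaves) :
    withLeaves n (insert (cherry u i j) S)
      = insert (cherry u i j) (((withLeaves n S).erase (BT.leaf i)).erase (BT.leaf j)) := by
  ext t
  simp only [mem_insert, mem_erase, mem_withLeaves, forall_eq_or_imp, cherry_leaves,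
    mem_singleton, not_or, or_assoc]
  constructor
  · rintro (rfl | ht | ⟨k, hk, ⟨⟨hki, hkj⟩, hkS⟩, rfl⟩)
    · exact Or.inl rfl
    · refine Or.inr ⟨?_, ?_, Or.inl ht⟩
      · rintro rfl; exact hjS _ ht (by simp [BT.leaves])
      · rintro rfl; exact hiS _ ht (by simp [BT.leaves])
    · exact Or.inr ⟨fun h => hkj (BT.leaf.inj h), fun h => hki (BT.leaf.inj h),
        Or.inr ⟨k, hk, hkS, rfl⟩⟩
  · rintro (rfl | ⟨htj, hti, ht | ⟨k, hk, hkS, rfl⟩⟩)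
    · exact Or.inl rfl
    · exact Or.inr (Or.inl ht)
    · exact Or.inr (Or.inr
        ⟨k, hk, ⟨⟨fun h => hti (h ▸ rfl), fun h => htj (h ▸ rfl)⟩, hkS⟩, rfl⟩)

lemma withLeaves_mergeW_leaf (u : Bool) (T : BT) (k : ℕ) :
    withLeaves n {mergeW u T (BT.leaf k)}
      = insert (mergeW u T (BT.leaf k)) (((withLeaves n {T}).erase T).erase (BT.leaf k)) := by
  ext t
  simp only [mem_insert, mem_erase, mem_withLeaves, mem_singleton, forall_eq,
    BT.leaves_mergeW, BT.leaves, mem_union, not_or]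
  constructor
  · rintro (rfl | ⟨i, hi, ⟨hiT, hik⟩, rfl⟩)
    · exact Or.inl rfl
    · refine Or.inr ⟨fun h => hik (BT.leaf.inj h), ?_, Or.inr ⟨i, hi, hiT, rfl⟩⟩
      rintro rfl
      exact hiT (by simp [BT.leaves])
  · rintro (rfl | ⟨htk, htT, rfl | ⟨i, hi, hiT, rfl⟩⟩)
    · exact Or.inl rfl
    · exact absurd rfl htT
    · exact Or.inr ⟨i, hi, ⟨hiT, fun h => htk (h ▸ rfl)⟩, rfl⟩

lemma mergeW_cherry_leaf (u : Bool) {m : ℕ} (hm : 2 < m) :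
    mergeW u (cherry false 1 2) (BT.leaf m) = mergeW false (cherry u 1 m) (BT.leaf 2) := by
  have hleft : ¬ ((BT.leaf m).nu < (BT.leaf 2).nu ∨ u < false) := by
    simp [BT.nu, Bool.lt_iff]; omega
  have hright : (BT.leaf 2).nu < (BT.leaf m).nu ∨ false < u := Or.inl hm
  rw [cherry, cherry, mergeW, if_neg hleft, mergeW, mergeW, if_pos hright]

def cherryFW (n : ℕ) (u : Bool) {a b : ℕ} (hab : a < b) (ha : 1 ≤ a) (hb : b ≤ n) :
    FLynW n :=
  ⟨withLeaves n {cherry u a b}, withLeaves_singleton_valid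
    ⟨trivial, trivial, by simpa [BT.leaves] using hab.ne, hab⟩ ⟨trivial, trivial, trivial⟩
    (by simp [cherry_leaves, insert_subset_iff]; omega)⟩

lemma covFW_botFW_cherryFW (u : Bool) {a b : ℕ} (hab : a < b) (ha : 1 ≤ a) (hb : b ≤ n) :
    covFW (botFW n) (cherryFW n u hab ha hb) := by
  refine ⟨BT.leaf a, ?_, BT.leaf b, ?_, hab, u, ?_⟩
  · simp [botFW, botForest]; omega
  · simp [botFW, botForest]; omega
  · show withLeaves n {cherry u a b}
      = insert (cherry u a b) (((botForest n).erase (BT.leaf a)).erase (BT.leaf b))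
    rw [← withLeaves_empty, ← withLeaves_insert_cherry u (by simp) (by simp), insert_empty]

lemma exists_ne_covFW_of_merge_cherry_leaf (hn : 2 ≤ n) {x : FLynW n} {u : Bool} {m : ℕ}
    (hm : 2 < m) (hmn : m ≤ n)
    (hx : x.1 = insert (mergeW u (cherry false 1 2) (BT.leaf m))
      (((withLeaves n {cherry false 1 2}).erase (cherry false 1 2)).erase (BT.leaf m))) :
    ∃ b ≠ cherryFW n false one_lt_two le_rfl hn, covFW b x := by
  refine ⟨cherryFW n u (by omega : 1 < m) le_rfl hmn, fun h => ?_,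
    cherry u 1 m, by simp [cherryFW, withLeaves], BT.leaf 2, ?_, ?_, false, ?_⟩
  · have := congrArg (cherry u 1 m ∈ ·.1) h
    simp [cherryFW, mem_withLeaves, cherry] at this
    omega
  · simp [cherryFW, mem_withLeaves, cherry_leaves]
    omega
  · show min 1 m < 2
    omega
  · rw [hx, ← withLeaves_mergeW_leaf, mergeW_cherry_leaf u hm, withLeaves_mergeW_leaf]
    rfl

lemma exists_ne_covFW_of_merge_leaves (hn : 2 ≤ n) {x : FLynW n} {u : Bool} {i j : ℕ}
    (hij : i < j) (hi : 2 < i) (hjn : j ≤ n)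
    (hx : x.1 = insert (cherry u i j)
      (((withLeaves n {cherry false 1 2}).erase (BT.leaf i)).erase (BT.leaf j))) :
    ∃ b ≠ cherryFW n false one_lt_two le_rfl hn, covFW b x := by
  refine ⟨cherryFW n u hij (by omega) hjn, fun h => ?_,
    BT.leaf 1, ?_, BT.leaf 2, ?_, one_lt_two, false, ?_⟩
  · have := congrArg (cherry u i j ∈ ·.1) h
    simp [cherryFW, mem_withLeaves, cherry] at this
    omega
  · simp [cherryFW, mem_withLeaves, cherry_leaves]
    omega
  · simp [cherryFW, mem_withLeaves, cherry_leaves]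
    omega
  · show x.1 = insert (cherry false 1 2)
      (((withLeaves n {cherry u i j}).erase (BT.leaf 1)).erase (BT.leaf 2))
    rw [hx, ← withLeaves_insert_cherry, ← withLeaves_insert_cherry, pair_comm] <;>
      simp [cherry_leaves] <;> omega

lemma exists_ne_covFW_of_cherryFW_covFW (hn : 2 ≤ n) {x : FLynW n}
    (hx : covFW (cherryFW n false one_lt_two le_rfl hn) x) :
    ∃ b ≠ cherryFW n false one_lt_two le_rfl hn, covFW b x := by
  obtain ⟨t1, ht1, t2, ht2, hnu, u, hx⟩ := hx
  simp only [cherryFW, mem_withLeaves, mem_singleton, forall_eq, cherry_leaves] at ht1 ht2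
  rcases ht1 with rfl | ⟨i, hi, hi12, rfl⟩ <;> rcases ht2 with rfl | ⟨j, hj, hj12, rfl⟩
  · exact absurd hnu (lt_irrefl _)
  · simp only [mem_Icc, mem_insert, mem_singleton, not_or] at hj hj12
    exact exists_ne_covFW_of_merge_cherry_leaf hn (by omega) hj.2 hx
  · simp [cherry, BT.nu] at hnu hi
    omega
  · simp only [BT.nu, mem_Icc, mem_insert, mem_singleton, not_or] at hnu hi hj hi12
    exact exists_ne_covFW_of_merge_leaves hn hnu (by omega) hj.2 hx

lemma rkFW_botFW : rkFW (botFW n) = 0 :=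
  sum_eq_zero (s := botForest n) fun t ht => by
    obtain ⟨i, -, rfl⟩ := mem_image.1 ht
    rfl

lemma hasAtomWithSharedCovers_covFW (hn : 2 ≤ n) :
    HasAtomWithSharedCovers (covFW (n := n)) := by
  have hrk : ∀ F F' : FLynW n, covFW F F' → rkFW F' = rkFW F + 1 := fun _ _ => rkFW_of_covFW
  refine ⟨cherryFW n false one_lt_two le_rfl hn, ⟨botFW n,
    eq_of_leOf_of_rank_eq_zero hrk rkFW_botFW,
    (covByOf_iff_cov hrk).2 (covFW_botFW_cherryFW false one_lt_two le_rfl hn)⟩, fun x hx => ?_⟩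
  obtain ⟨b, hb, hbx⟩ := exists_ne_covFW_of_cherryFW_covFW hn ((covByOf_iff_cov hrk).1 hx)
  exact ⟨b, hb, (covByOf_iff_cov hrk).2 hbx⟩

end LyndonForests

/-- For all `n ≥ 3`, the poset of bicolored Lyndon forests `FLynₙʷ` and
Reiner's poset of rooted spanning forests `SFₙ` are not isomorphic as posets. -/
theorem FLynW_not_iso_SF (n : ℕ) (hn : 3 ≤ n) :
    ¬ CovPosetIso (covFW (n := n)) (covSF (n := n)) := fun h =>
  not_hasAtomWithSharedCovers_covSF hn
    ((hasAtomWithSharedCovers_congr h).1 (hasAtomWithSharedCovers_covFW (by omega)))
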